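/- Suppose K_j, K : Ω × Ω → ℂ (Ω ⊆ ℂ open connected) are functions holomorphic in (ζ, z̄) (i.e. (ζ,w) ↦ K_j(ζ, w̄) is holomorphic), the family {K_j} is locally uniformly bounded, and K_j(z,z) → K(z,z) for every z ∈ Ω. Then K_j → K uniformly on compact subsets of Ω × Ω. -/

import Mathlib

/-!
Put `f_j (ζ, w) = K_j (ζ, w̄)`, holomorphic on `Ω × Ω̄`. A locally bounded family of holomorphic
functions is equicontinuous (Schwarz lemma along complex lines), so by Arzelà–Ascoli the `f_j` lie
in a compact set for locally uniform convergence, and it suffices that every cluster point `g`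
equals `f (ζ, w) = K (ζ, w̄)`. Such a `g` is a locally uniform limit, hence holomorphic along
complex lines, and it agrees with `f` on the totally real diagonal `{(z, z̄)}`. In the coordinates
`(ζ, w) = (a + u + i v, ā + u - i v)` the diagonal is `u, v ∈ ℝ`, so two applications of the
one-variable identity theorem give `g = f` near `(a, ā)`, and a third one, in `w`, on all of
`Ω × Ω̄`.
-/

open Complex Filter Metric Set Topology ComplexConjugate

section Lines

variable {E F : Type*} [NormedAddCommGroup E] [NormedSpace ℂ E]
  [NormedAddCommGroup F] [NormedSpace ℂ F]

/-- Weaker than holomorphy on `E`, but it passes to locally uniform limits by one-variable theory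
alone. -/
def DifferentiableOnLines (f : E → F) (U : Set E) : Prop :=
  ∀ p v : E, DifferentiableOn ℂ (fun t : ℂ => f (p + t • v)) ((fun t : ℂ => p + t • v) ⁻¹' U)

theorem DifferentiableOn.differentiableOnLines {f : E → F} {U : Set E}
    (hf : DifferentiableOn ℂ f U) : DifferentiableOnLines f U := fun p v =>
  hf.comp (by fun_prop : Differentiable ℂ fun t : ℂ => p + t • v).differentiableOn
    (mapsTo_preimage _ _)

theorem DifferentiableOnLines.mono {f : E → F} {U V : Set E} (hf : DifferentiableOnLines f U)
    (hVU : V ⊆ U) : DifferentiableOnLines f V := fun p v =>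
  (hf p v).mono (preimage_mono hVU)

theorem DifferentiableOnLines.sub {f g : E → F} {U : Set E} (hf : DifferentiableOnLines f U)
    (hg : DifferentiableOnLines g U) : DifferentiableOnLines (f - g) U := fun p v =>
  (hf p v).sub (hg p v)

theorem TendstoLocallyUniformlyOn.differentiableOnLines [CompleteSpace F] {ι : Type*}
    {l : Filter ι} [l.NeBot] {G : ι → E → F} {f : E → F} {U : Set E} (hU : IsOpen U)
    (hGf : TendstoLocallyUniformlyOn G f l U) (hG : ∀ i, DifferentiableOnLines (G i) U) :
    DifferentiableOnLines f U := fun p v =>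
  (hGf.comp _ (mapsTo_preimage _ _) (by fun_prop : Continuous fun t : ℂ => p + t • v).continuousOn
    ).differentiableOn (Eventually.of_forall fun i => hG i p v) (hU.preimage (by fun_prop))

end Lines

section Diagonal

variable {F : Type*} [NormedAddCommGroup F] [NormedSpace ℂ F] [CompleteSpace F]

theorem eqOn_zero_of_forall_ofReal {h : ℂ → F} {ρ : ℝ} (hd : DifferentiableOn ℂ h (ball 0 ρ))
    (h0 : ∀ x : ℝ, |x| < ρ → h x = 0) : EqOn h 0 (ball 0 ρ) := by
  rcases le_or_gt ρ 0 with hρ | hρ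
  · simp [ball_eq_empty.2 hρ]
  refine (hd.analyticOnNhd isOpen_ball).eqOn_zero_of_preconnected_of_frequently_eq_zero
    (convex_ball 0 ρ).isPreconnected (mem_ball_self hρ) ?_
  have hreal : Tendsto ((↑) : ℝ → ℂ) (𝓝[≠] 0) (𝓝[≠] 0) :=
    tendsto_nhdsWithin_of_tendsto_nhds_of_eventually_within _
      (continuous_ofReal.tendsto' 0 0 ofReal_zero |>.mono_left nhdsWithin_le_nhds)
      (eventually_nhdsWithin_of_forall fun x hx => by simpa using hx)
  refine hreal.frequently (Eventually.frequently ?_)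
  filter_upwards [nhdsWithin_le_nhds (Iio_mem_nhds hρ |> (continuous_abs.tendsto' 0 0 abs_zero))]
    with x hx using h0 x hx

theorem norm_smul_add_smul_lt {u v : ℂ} {ρ : ℝ} (hu : ‖u‖ < ρ) (hv : ‖v‖ < ρ) :
    ‖u • ((1 : ℂ), (1 : ℂ)) + v • (I, -I)‖ < 2 * ρ := by
  calc ‖u • ((1 : ℂ), (1 : ℂ)) + v • (I, -I)‖
      ≤ ‖u • ((1 : ℂ), (1 : ℂ))‖ + ‖v • (I, -I)‖ := norm_add_le _ _
    _ = ‖u‖ + ‖v‖ := by simp [Prod.norm_def]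
    _ < 2 * ρ := by linarith

theorem exists_eq_smul_add_smul {d : ℂ × ℂ} {ρ : ℝ} (hd : ‖d‖ < ρ) :
    ∃ u v : ℂ, ‖u‖ < ρ ∧ ‖v‖ < ρ ∧ d = u • ((1 : ℂ), (1 : ℂ)) + v • (I, -I) := by
  obtain ⟨d₁, d₂⟩ := d
  rw [Prod.norm_def, max_lt_iff] at hd
  refine ⟨(d₁ + d₂) / 2, (d₁ - d₂) / (2 * I), ?_, ?_, ?_⟩
  · rw [norm_div, RCLike.norm_ofNat, div_lt_iff₀ two_pos]
    linarith [norm_add_le d₁ d₂]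
  · rw [norm_div, norm_mul, norm_I, RCLike.norm_ofNat, mul_one, div_lt_iff₀ two_pos]
    linarith [norm_sub_le d₁ d₂]
  · ext <;> simp only [Prod.fst_add, Prod.snd_add, Prod.smul_fst, Prod.smul_snd, smul_eq_mul] <;>
      field_simp <;> ring

theorem eqOn_zero_of_diagonal_ball {g : ℂ × ℂ → F} {a : ℂ} {ρ : ℝ}
    (hg : DifferentiableOnLines g (ball (a, conj a) (2 * ρ)))
    (h0 : ∀ z, (z, conj z) ∈ ball (a, conj a) (2 * ρ) → g (z, conj z) = 0) :
    EqOn g 0 (ball (a, conj a) ρ) := by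
  set c : ℂ × ℂ := (a, conj a)
  set e : ℂ × ℂ := (1, 1)
  set e' : ℂ × ℂ := (I, -I)
  have hmem : ∀ u v : ℂ, ‖u‖ < ρ → ‖v‖ < ρ → c + u • e + v • e' ∈ ball c (2 * ρ) :=
    fun u v hu hv => by
      rw [mem_ball_iff_norm, add_assoc, add_sub_cancel_left]; exact norm_smul_add_smul_lt hu hv
  -- `c + x e + y e'` is the diagonal point `(z, conj z)` with `z = a + x + y I`
  have hreal : ∀ x y : ℝ, |x| < ρ → |y| < ρ → g (c + (x : ℂ) • e + (y : ℂ) • e') = 0 := by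
    intro x y hx hy
    have hz : c + (x : ℂ) • e + (y : ℂ) • e' = (a + x + y * I, conj (a + x + y * I)) := by
      ext <;> simp [c, e, e']
    rw [hz]
    exact h0 _ (hz ▸ hmem x y (by simpa using hx) (by simpa using hy))
  have hrealv : ∀ y : ℝ, |y| < ρ → ∀ u ∈ ball (0 : ℂ) ρ, g (c + u • e + (y : ℂ) • e') = 0 := by
    intro y hy
    have := eqOn_zero_of_forall_ofReal (h := fun u => g (c + (y : ℂ) • e' + u • e))
      ((hg _ e).mono fun u hu => by
        simpa [add_right_comm] using hmem u y (by simpa using hu) (by simpa using hy))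
      (fun x hx => by simpa [add_right_comm] using hreal x y hx hy)
    exact fun u hu => by simpa [add_right_comm] using this hu
  have hcomplex : ∀ u ∈ ball (0 : ℂ) ρ, ∀ v ∈ ball (0 : ℂ) ρ, g (c + u • e + v • e') = 0 :=
    fun u hu => eqOn_zero_of_forall_ofReal
      ((hg _ e').mono fun v hv => hmem u v (by simpa using hu) (by simpa using hv))
      (fun y hy => hrealv y hy u hu)
  intro q hq
  obtain ⟨u, v, hu, hv, hd⟩ := exists_eq_smul_add_smul (mem_ball_iff_norm.1 hq)
  rw [show q = c + u • e + v • e' by rw [add_assoc, ← hd]; abel]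
  exact hcomplex u (by simpa using hu) v (by simpa using hv)

theorem isOpen_conj_image {Ω : Set ℂ} (hΩ : IsOpen Ω) : IsOpen (conj '' Ω) :=
  conjCLE.toHomeomorph.isOpenMap Ω hΩ

theorem eqOn_zero_of_diagonal {Ω : Set ℂ} (hΩ : IsOpen Ω) (hconn : IsPreconnected Ω)
    {g : ℂ × ℂ → F} (hg : DifferentiableOnLines g (Ω ×ˢ (conj '' Ω)))
    (h0 : ∀ z ∈ Ω, g (z, conj z) = 0) : EqOn g 0 (Ω ×ˢ (conj '' Ω)) := by
  rintro ⟨z, w⟩ ⟨hz, hw⟩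
  obtain ⟨ε, hε, hball⟩ := Metric.isOpen_iff.1 (hΩ.prod (isOpen_conj_image hΩ)) (z, conj z)
    ⟨hz, mem_image_of_mem _ hz⟩
  have hball' : ball (z, conj z) (2 * (ε / 2)) ⊆ Ω ×ˢ (conj '' Ω) := by
    rwa [mul_div_cancel₀ _ two_ne_zero]
  have hnear := eqOn_zero_of_diagonal_ball (hg.mono hball') fun ζ hζ => h0 ζ (hball' hζ).1
  have hslice : AnalyticOnNhd ℂ (fun w => g (z, w)) (conj '' Ω) := by
    have := hg (z, 0) (0, 1)
    simp only [Prod.smul_mk, smul_eq_mul, mul_zero, mul_one, Prod.mk_add_mk, add_zero,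
      zero_add] at this
    exact (this.mono fun w hw => ⟨hz, hw⟩).analyticOnNhd (isOpen_conj_image hΩ)
  refine hslice.eqOn_zero_of_preconnected_of_eventuallyEq_zero
    (hconn.image _ continuous_conj.continuousOn) (mem_image_of_mem _ hz) ?_ hw
  filter_upwards [ball_mem_nhds (conj z) (half_pos hε)] with w hw
  exact hnear (by simpa [Prod.dist_eq, half_pos hε] using hw)

theorem eqOn_of_tendstoLocallyUniformlyOn_of_diagonal {Ω : Set ℂ} (hΩ : IsOpen Ω)
    (hconn : IsPreconnected Ω) {ι : Type*} {l : Filter ι} [l.NeBot] {G : ι → ℂ × ℂ → F}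
    {g f : ℂ × ℂ → F} (hG : ∀ i, DifferentiableOn ℂ (G i) (Ω ×ˢ (conj '' Ω)))
    (hf : DifferentiableOn ℂ f (Ω ×ˢ (conj '' Ω)))
    (hGg : TendstoLocallyUniformlyOn G g l (Ω ×ˢ (conj '' Ω)))
    (hdiag : ∀ z ∈ Ω, Tendsto (fun i => G i (z, conj z)) l (𝓝 (f (z, conj z)))) :
    EqOn g f (Ω ×ˢ (conj '' Ω)) := by
  have hg := hGg.differentiableOnLines (hΩ.prod (isOpen_conj_image hΩ))
    fun i => (hG i).differentiableOnLines
  have h0 : ∀ z ∈ Ω, (g - f) (z, conj z) = 0 := fun z hz => sub_eq_zero.2 <|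
    tendsto_nhds_unique (hGg.tendsto_at ⟨hz, mem_image_of_mem _ hz⟩) (hdiag z hz)
  exact fun p hp =>
    sub_eq_zero.1 (eqOn_zero_of_diagonal hΩ hconn (hg.sub hf.differentiableOnLines) h0 hp)

end Diagonal

section Montel

variable {E F : Type*} [NormedAddCommGroup E] [NormedSpace ℂ E]
  [NormedAddCommGroup F] [NormedSpace ℂ F]

theorem dist_le_div_mul_dist_of_mapsTo_ball_of_differentiableOn {f : E → F} {c z : E} {R₁ R₂ : ℝ}
    (hd : DifferentiableOn ℂ f (ball c R₁)) (h_maps : MapsTo f (ball c R₁) (closedBall (f c) R₂))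
    (hz : z ∈ ball c R₁) : dist (f z) (f c) ≤ R₂ / R₁ * dist z c := by
  rcases eq_or_ne z c with rfl | hzc
  · simp
  have hzc : 0 < dist z c := dist_pos.2 hzc
  have hline : MapsTo (fun t : ℂ => c + t • (z - c)) (ball 0 (R₁ / dist z c)) (ball c R₁) := by
    intro t ht
    rw [mem_ball_zero_iff, lt_div_iff₀ hzc] at ht
    rwa [mem_ball, dist_eq_norm, add_sub_cancel_left, norm_smul, ← dist_eq_norm]
  have h1 : (1 : ℂ) ∈ ball 0 (R₁ / dist z c) := by
    rw [mem_ball_zero_iff, norm_one, one_lt_div hzc]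
    exact hz
  have := Complex.dist_le_div_mul_dist_of_mapsTo_ball
    (hd.comp (by fun_prop : Differentiable ℂ fun t : ℂ => c + t • (z - c)).differentiableOn hline)
    (by simpa using h_maps.comp hline) h1
  simp only [Function.comp_apply, one_smul, add_sub_cancel, zero_smul, add_zero] at this
  rwa [div_div_eq_mul_div, mul_div_right_comm, dist_zero_right, norm_one, mul_one] at this

theorem equicontinuousAt_of_differentiableOn_ball {ι : Type*} {f : ι → E → F} {x : E} {r M : ℝ}
    (hd : ∀ i, DifferentiableOn ℂ (f i) (ball x r)) (hb : ∀ i, ∀ y ∈ ball x r, ‖f i y‖ ≤ M)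
    (hr : 0 < r) : EquicontinuousAt f x := by
  refine Metric.equicontinuousAt_of_continuity_modulus (fun y => 2 * M / r * dist y x) ?_ f ?_
  · exact (continuous_const.mul (continuous_id.dist continuous_const)).tendsto' x 0 (by simp)
  · filter_upwards [ball_mem_nhds x hr] with y hy i
    have h_maps : MapsTo (f i) (ball x r) (closedBall (f i x) (2 * M)) := fun w hw => by
      rw [mem_closedBall, dist_eq_norm, two_mul]
      exact (norm_sub_le _ _).trans (add_le_add (hb i w hw) (hb i x (mem_ball_self hr)))
    rw [dist_comm]
    exact dist_le_div_mul_dist_of_mapsTo_ball_of_differentiableOn (hd i) h_maps hy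

/-- Montel's theorem, in the topology of uniform convergence on compact subsets of `U`. -/
theorem isCompact_closure_range_of_locallyBounded [ProperSpace F] {U : Set E} (hU : IsOpen U)
    {ι : Type*} {f : ι → E → F} (hd : ∀ i, DifferentiableOn ℂ (f i) U)
    (hb : ∀ x ∈ U, ∃ V ∈ 𝓝 x, ∃ M, ∀ i, ∀ y ∈ V, ‖f i y‖ ≤ M) :
    IsCompact (closure (range fun i => UniformOnFun.ofFun {K | IsCompact K ∧ K ⊆ U} (f i))) := by
  have hequi : ∀ x ∈ U, EquicontinuousAt f x := by
    intro x hx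
    obtain ⟨V, hV, M, hM⟩ := hb x hx
    obtain ⟨r, hr, hrVU⟩ := Metric.mem_nhds_iff.1 (inter_mem hV (hU.mem_nhds hx))
    exact equicontinuousAt_of_differentiableOn_ball (fun i => (hd i).mono fun y hy => (hrVU hy).2)
      (fun i y hy => hM i y (hrVU hy).1) hr
  refine ArzelaAscoli.isCompact_closure_of_isClosedEmbedding (F := UniformOnFun.toFun _)
    (fun K hK => hK.1) Topology.IsClosedEmbedding.id (fun K hK => ?_) (fun K hK x hx => ?_)
  · exact equicontinuousOn_iff_range.1 fun x hx => (hequi x (hK.2 hx)).equicontinuousWithinAt K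
  · obtain ⟨V, hV, M, hM⟩ := hb x (hK.2 hx)
    refine ⟨closedBall 0 M, isCompact_closedBall 0 M, ?_⟩
    rintro _ ⟨i, rfl⟩
    simpa using hM i x (mem_of_mem_nhds hV)

end Montel

section UniformOnFun

variable {α β ι : Type*} [UniformSpace β] {𝔖 : Set (Set α)}

theorem UniformOnFun.nhds_le_nhds_of_eqOn {f g : UniformOnFun α β 𝔖}
    (h : ∀ K ∈ 𝔖, EqOn (toFun 𝔖 f) (toFun 𝔖 g) K) : 𝓝 f ≤ 𝓝 g :=
  tendsto_id'.1 <| UniformOnFun.tendsto_iff_tendstoUniformlyOn.2 fun K hK =>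
    (UniformOnFun.tendsto_iff_tendstoUniformlyOn.1 tendsto_id K hK).congr_right (h K hK)

theorem tendstoUniformlyOn_of_isCompact_of_mapClusterPt {l : Filter ι} {G : ι → α → β}
    {f : α → β} {s : Set (UniformOnFun α β 𝔖)} (hs : IsCompact s)
    (hGs : ∀ᶠ i in l, UniformOnFun.ofFun 𝔖 (G i) ∈ s)
    (h : ∀ g ∈ s, MapClusterPt g l (fun i => UniformOnFun.ofFun 𝔖 (G i)) →
      ∀ K ∈ 𝔖, EqOn (UniformOnFun.toFun 𝔖 g) f K) :
    ∀ K ∈ 𝔖, TendstoUniformlyOn G f l K :=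
  UniformOnFun.tendsto_iff_tendstoUniformlyOn.1 <|
    (hs.tendsto_nhdsSet_of_mapClusterPt hGs h).mono_right <|
      nhdsSet_le.2 fun _ hg => UniformOnFun.nhds_le_nhds_of_eqOn hg

end UniformOnFun

theorem tendstoUniformlyOn_of_tendsto_diagonal {F : Type*} [NormedAddCommGroup F]
    [NormedSpace ℂ F] [ProperSpace F] {Ω : Set ℂ} (hΩ : IsOpen Ω) (hconn : IsPreconnected Ω)
    {ι : Type*} {l : Filter ι} {G : ι → ℂ × ℂ → F} {f : ℂ × ℂ → F}
    (hG : ∀ i, DifferentiableOn ℂ (G i) (Ω ×ˢ (conj '' Ω)))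
    (hf : DifferentiableOn ℂ f (Ω ×ˢ (conj '' Ω)))
    (hb : ∀ x ∈ Ω ×ˢ (conj '' Ω), ∃ V ∈ 𝓝 x, ∃ M, ∀ i, ∀ y ∈ V, ‖G i y‖ ≤ M)
    (hdiag : ∀ z ∈ Ω, Tendsto (fun i => G i (z, conj z)) l (𝓝 (f (z, conj z))))
    {C : Set (ℂ × ℂ)} (hCU : C ⊆ Ω ×ˢ (conj '' Ω)) (hC : IsCompact C) :
    TendstoUniformlyOn G f l C := by
  have hU : IsOpen (Ω ×ˢ (conj '' Ω)) := hΩ.prod (isOpen_conj_image hΩ)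
  refine tendstoUniformlyOn_of_isCompact_of_mapClusterPt
    (isCompact_closure_range_of_locallyBounded hU hG hb)
    (Eventually.of_forall fun i => subset_closure (mem_range_self i))
    (fun g _ hg K hK => ?_) C ⟨hC, hCU⟩
  obtain ⟨𝒰, h𝒰, hlim⟩ := mapClusterPt_iff_ultrafilter.1 hg
  have hGg : TendstoLocallyUniformlyOn G (UniformOnFun.toFun _ g) 𝒰 (Ω ×ˢ (conj '' Ω)) :=
    (tendstoLocallyUniformlyOn_iff_forall_isCompact hU).2 fun L hLU hL =>
      UniformOnFun.tendsto_iff_tendstoUniformlyOn.1 hlim L ⟨hL, hLU⟩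
  exact (eqOn_of_tendstoLocallyUniformlyOn_of_diagonal hΩ hconn hG hf hGg
    fun z hz => (hdiag z hz).mono_left h𝒰).mono hK.2

/-- If kernels `K_j` on `Ω × Ω` are holomorphic in `(ζ, z̄)`, locally uniformly bounded,
and converge on the diagonal to a kernel `K` of the same type, then `K_j → K` uniformly
on compact subsets of `Ω × Ω`. -/
theorem kernels_converge_from_diagonal (Ω : Set ℂ) (hΩ : IsOpen Ω) (hconn : IsConnected Ω)
    (Kj : ℕ → ℂ → ℂ → ℂ) (K : ℂ → ℂ → ℂ)
    (hKj : ∀ j, DifferentiableOn ℂ (fun p : ℂ × ℂ => Kj j p.1 ((starRingEnd ℂ) p.2))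
      (Ω ×ˢ ((starRingEnd ℂ) '' Ω)))
    (hK : DifferentiableOn ℂ (fun p : ℂ × ℂ => K p.1 ((starRingEnd ℂ) p.2))
      (Ω ×ˢ ((starRingEnd ℂ) '' Ω)))
    (hbdd : ∀ C ⊆ Ω ×ˢ Ω, IsCompact C → ∃ M : ℝ, ∀ j, ∀ p ∈ C, ‖Kj j p.1 p.2‖ ≤ M)
    (hdiag : ∀ z ∈ Ω, Tendsto (fun j => Kj j z z) atTop (nhds (K z z))) :
    ∀ C ⊆ Ω ×ˢ Ω, IsCompact C →
      TendstoUniformlyOn (fun j (p : ℂ × ℂ) => Kj j p.1 p.2)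
        (fun p : ℂ × ℂ => K p.1 p.2) atTop C := by
  intro C hC hCc
  set σ : ℂ × ℂ → ℂ × ℂ := fun p => (p.1, conj p.2)
  have hσ : Continuous σ := by fun_prop
  have hσU : MapsTo σ (Ω ×ˢ (conj '' Ω)) (Ω ×ˢ Ω) := by
    rintro p ⟨h₁, z, hz, h₂⟩
    exact ⟨h₁, by simpa [σ, ← h₂] using hz⟩
  have hσC : σ '' C ⊆ Ω ×ˢ (conj '' Ω) := by
    rintro _ ⟨p, hp, rfl⟩
    exact ⟨(hC hp).1, mem_image_of_mem _ (hC hp).2⟩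
  have hb : ∀ x ∈ Ω ×ˢ (conj '' Ω), ∃ V ∈ 𝓝 x, ∃ M, ∀ j, ∀ y ∈ V, ‖Kj j y.1 (conj y.2)‖ ≤ M := by
    intro x hx
    obtain ⟨V, hVc, hxV, hVU⟩ := exists_compact_subset (hΩ.prod (isOpen_conj_image hΩ)) hx
    obtain ⟨M, hM⟩ := hbdd (σ '' V) (hσU.mono_left hVU).image_subset (hVc.image hσ)
    exact ⟨V, mem_interior_iff_mem_nhds.1 hxV, M, fun j y hy => hM j _ (mem_image_of_mem σ hy)⟩
  have hconv := tendstoUniformlyOn_of_tendsto_diagonal hΩ hconn.isPreconnected hKj hK hb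
    (fun z hz => by simpa using hdiag z hz) hσC (hCc.image hσ)
  simpa [Function.comp_def, σ] using (hconv.comp σ).mono (subset_preimage_image σ C)
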